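/- arXiv:2101.09337 — 4 statements merged into one kernel-verified Lean document; each statement's English description precedes it below -/
import Mathlib

section
/- Suppose a point x̂ ∈ ℝ^d satisfies: for every subset S of a finite set H with |H| = h ≥ n - f and |S| = n - f, x̂ is a minimizer of ∑_{i∈S} Q_i over ℝ^d. Then x̂ is a minimizer of ∑_{i∈H} Q_i over ℝ^d. -/
/-! Summing the hypothesis over all `(n - f)`-subsets of `H` counts every index of `H` exactly
`(h - 1).choose (n - f - 1)` times, a positive number, so the inequality for `H` is a positive
multiple of a sum of valid inequalities. -/

open Finset

namespace Finset

variable {ι : Type*} {s : Finset ι} {k : ℕ}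

lemma card_filter_mem_powersetCard [DecidableEq ι] {a : ι} (ha : a ∈ s) (hk : 1 ≤ k) :
    #{t ∈ s.powersetCard k | a ∈ t} = (#s - 1).choose (k - 1) := by
  simpa only [singleton_subset_iff, card_singleton] using
    card_filter_powersetCard_subset {a} s k (singleton_subset_iff.2 ha) hk

lemma sum_powersetCard_sum {M : Type*} [AddCommMonoid M] (hk : 1 ≤ k) (f : ι → M) :
    ∑ t ∈ s.powersetCard k, ∑ i ∈ t, f i = (#s - 1).choose (k - 1) • ∑ i ∈ s, f i := by
  classical
  have hswap : ∑ t ∈ s.powersetCard k, ∑ i ∈ t, f i =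
      ∑ i ∈ s, ∑ _t ∈ (s.powersetCard k).filter (i ∈ ·), f i :=
    sum_comm' fun t i => by
      simp only [mem_filter, mem_powersetCard]
      exact ⟨fun ⟨⟨hts, htk⟩, hit⟩ => ⟨⟨⟨hts, htk⟩, hit⟩, hts hit⟩,
        fun ⟨⟨⟨hts, htk⟩, hit⟩, _⟩ => ⟨⟨hts, htk⟩, hit⟩⟩
  rw [hswap, smul_sum]
  refine sum_congr rfl fun i hi => ?_
  rw [sum_const, card_filter_mem_powersetCard hi hk]

lemma sum_le_sum_of_forall_subset_card_eq {M : Type*} [AddCommMonoid M] [LinearOrder M]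
    [IsOrderedCancelAddMonoid M] {f g : ι → M} (hk : 1 ≤ k) (hks : k ≤ #s)
    (h : ∀ t ⊆ s, #t = k → ∑ i ∈ t, f i ≤ ∑ i ∈ t, g i) :
    ∑ i ∈ s, f i ≤ ∑ i ∈ s, g i := by
  have hchoose : (#s - 1).choose (k - 1) ≠ 0 := (Nat.choose_pos (by omega)).ne'
  rw [← nsmul_le_nsmul_iff_right hchoose, ← sum_powersetCard_sum hk, ← sum_powersetCard_sum hk]
  exact sum_le_sum fun t ht => h t (mem_powersetCard.1 ht).1 (mem_powersetCard.1 ht).2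

end Finset

theorem stmt_4 {ι : Type*} {d : ℕ} (H : Finset ι) (n f : ℕ)
    (hnf : 1 ≤ n - f) (hcard : n - f ≤ H.card)
    (Q : ι → EuclideanSpace ℝ (Fin d) → ℝ) (xhat : EuclideanSpace ℝ (Fin d))
    (hmin : ∀ S ⊆ H, S.card = n - f →
      ∀ x : EuclideanSpace ℝ (Fin d), ∑ i ∈ S, Q i xhat ≤ ∑ i ∈ S, Q i x) :
    ∀ x : EuclideanSpace ℝ (Fin d), ∑ i ∈ H, Q i xhat ≤ ∑ i ∈ H, Q i x := fun x =>
  sum_le_sum_of_forall_subset_card_eq hnf hcard fun S hSH hSc => hmin S hSH hSc x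
end

section
/- Let f be a natural number with f < n/2, let g_1, ..., g_n be real numbers with sorted ordering g_{i_1} ≤ ... ≤ g_{i_n}, and let H ⊆ {1,...,n} with |H| ≥ n - f. Then for every j with f+1 ≤ j ≤ n-f, min_{i∈H} g_i ≤ g_{i_j} ≤ max_{i∈H} g_i; consequently the trimmed mean (1/(n-2f)) ∑_{j=f+1}^{n-f} g_{i_j} lies in [min_{i∈H} g_i, max_{i∈H} g_i]. -/
theorem stmt_9 (n f : ℕ) (hnf : 2 * f + 1 ≤ n)
    (g : Fin n → ℝ) (σ : Equiv.Perm (Fin n))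
    (hsort : ∀ j k : Fin n, j ≤ k → g (σ j) ≤ g (σ k))
    (H : Finset (Fin n)) (hHcard : n - f ≤ H.card) (hHne : H.Nonempty) :
    (∀ j : Fin n, f ≤ (j : ℕ) → (j : ℕ) < n - f →
      H.inf' hHne g ≤ g (σ j) ∧ g (σ j) ≤ H.sup' hHne g) ∧
    (H.inf' hHne g ≤
        (1 / ((n : ℝ) - 2 * f)) *
          ∑ j ∈ Finset.univ.filter (fun j : Fin n => f ≤ (j : ℕ) ∧ (j : ℕ) < n - f), g (σ j) ∧
      (1 / ((n : ℝ) - 2 * f)) *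
          ∑ j ∈ Finset.univ.filter (fun j : Fin n => f ≤ (j : ℕ) ∧ (j : ℕ) < n - f), g (σ j)
        ≤ H.sup' hHne g) := by
  have hfn : f < n := by omega
  -- intersection lemma
  have hint : ∀ S : Finset (Fin n), n < S.card + H.card → (S ∩ H).Nonempty := by
    intro S hc
    rw [Finset.nonempty_iff_ne_empty]
    intro hemp
    have hdisj : Disjoint S H := Finset.disjoint_iff_inter_eq_empty.mpr hemp
    have := Finset.card_union_of_disjoint hdisj
    have hle : (S ∪ H).card ≤ n := by
      simpa using Finset.card_le_univ (S ∪ H)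
    omega
  have key : ∀ j : Fin n, f ≤ (j : ℕ) → (j : ℕ) < n - f →
      H.inf' hHne g ≤ g (σ j) ∧ g (σ j) ≤ H.sup' hHne g := by
    intro j hj1 hj2
    constructor
    · have hS : n < ((Finset.Iic j).image σ).card + H.card := by
        rw [Finset.card_image_of_injective _ σ.injective, Fin.card_Iic]
        omega
      obtain ⟨i, hi⟩ := hint _ hS
      rw [Finset.mem_inter, Finset.mem_image] at hi
      obtain ⟨⟨k, hk, hki⟩, hiH⟩ := hi
      calc H.inf' hHne g ≤ g i := Finset.inf'_le _ hiH
        _ = g (σ k) := by rw [hki]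
        _ ≤ g (σ j) := hsort _ _ (Finset.mem_Iic.mp hk)
    · have hS : n < ((Finset.Ici j).image σ).card + H.card := by
        rw [Finset.card_image_of_injective _ σ.injective, Fin.card_Ici]
        omega
      obtain ⟨i, hi⟩ := hint _ hS
      rw [Finset.mem_inter, Finset.mem_image] at hi
      obtain ⟨⟨k, hk, hki⟩, hiH⟩ := hi
      calc g (σ j) ≤ g (σ k) := hsort _ _ (Finset.mem_Ici.mp hk)
        _ = g i := by rw [hki]
        _ ≤ H.sup' hHne g := Finset.le_sup' _ hiH
  refine ⟨key, ?_⟩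
  set T := Finset.univ.filter (fun j : Fin n => f ≤ (j : ℕ) ∧ (j : ℕ) < n - f) with hT
  have hTcard : T.card = n - 2 * f := by
    have himg : T.image Fin.val = Finset.Ico f (n - f) := by
      ext m
      simp only [hT, Finset.mem_image, Finset.mem_filter, Finset.mem_univ, true_and,
        Finset.mem_Ico]
      constructor
      · rintro ⟨j, hj, rfl⟩; exact hj
      · intro hm; exact ⟨⟨m, by omega⟩, hm, rfl⟩
    have := Finset.card_image_of_injective T Fin.val_injective
    rw [himg, Nat.card_Ico] at this
    omega
  have hpos : (0:ℝ) < (n:ℝ) - 2 * f := by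
    have : (2*f + 1 : ℝ) ≤ n := by exact_mod_cast hnf
    linarith
  have hsum_lo : (H.inf' hHne g) * ((n:ℝ) - 2*f) ≤ ∑ j ∈ T, g (σ j) := by
    have : ∑ j ∈ T, H.inf' hHne g ≤ ∑ j ∈ T, g (σ j) := by
      apply Finset.sum_le_sum
      intro j hj
      simp only [hT, Finset.mem_filter] at hj
      exact (key j hj.2.1 hj.2.2).1
    rw [Finset.sum_const, hTcard] at this
    have hcast : ((n - 2*f : ℕ) : ℝ) = (n:ℝ) - 2*f := by
      push_cast [Nat.cast_sub (by omega : 2*f ≤ n)]; ring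
    calc (H.inf' hHne g) * ((n:ℝ) - 2*f) = (n - 2*f : ℕ) • H.inf' hHne g := by
          rw [nsmul_eq_mul, hcast]; ring
      _ ≤ _ := this
  have hsum_hi : ∑ j ∈ T, g (σ j) ≤ (H.sup' hHne g) * ((n:ℝ) - 2*f) := by
    have : ∑ j ∈ T, g (σ j) ≤ ∑ j ∈ T, H.sup' hHne g := by
      apply Finset.sum_le_sum
      intro j hj
      simp only [hT, Finset.mem_filter] at hj
      exact (key j hj.2.1 hj.2.2).2
    rw [Finset.sum_const, hTcard] at this
    have hcast : ((n - 2*f : ℕ) : ℝ) = (n:ℝ) - 2*f := by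
      push_cast [Nat.cast_sub (by omega : 2*f ≤ n)]; ring
    calc ∑ j ∈ T, g (σ j) ≤ (n - 2*f : ℕ) • H.sup' hHne g := this
      _ = _ := by rw [nsmul_eq_mul, hcast]; ring
  constructor
  · rw [one_div, inv_mul_eq_div, le_div_iff₀ hpos]
    exact hsum_lo
  · rw [one_div, inv_mul_eq_div, div_le_iff₀ hpos]
    exact hsum_hi
end

section
/- Let {u_t}_{t≥0} be a sequence of nonnegative reals. If ∑_{t=0}^∞ max(u_{t+1} - u_t, 0) < ∞, then the sequence u_t converges to a finite limit, and ∑_{t=0}^∞ min(u_{t+1} - u_t, 0) > -∞. -/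
/-! The increments `d t = u (t + 1) - u t` telescope, so
`∑_{t<N} min (d t) 0 = u N - u 0 - ∑_{t<N} max (d t) 0` is bounded below once `u` is bounded below
and the positive parts are summable. Both parts of `d` are then summable, hence so is `d`, and
`u N = u 0 + ∑_{t<N} d t` converges. -/

open Filter Topology

theorem summable_min_sub_zero_of_bddBelow {u : ℕ → ℝ} (hbdd : BddBelow (Set.range u))
    (hpos : Summable fun t => max (u (t + 1) - u t) 0) :
    Summable fun t => min (u (t + 1) - u t) 0 := by
  obtain ⟨c, hc⟩ := hbdd
  have hneg : Summable fun t => -min (u (t + 1) - u t) 0 := by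
    refine summable_of_sum_range_le (c := (∑' t, max (u (t + 1) - u t) 0) + u 0 - c)
      (fun t => by simp) fun N => ?_
    have hsplit : ∑ t ∈ Finset.range N, -min (u (t + 1) - u t) 0
        = ∑ t ∈ Finset.range N, max (u (t + 1) - u t) 0 - (u N - u 0) := by
      rw [← Finset.sum_range_sub u N, ← Finset.sum_sub_distrib]
      refine Finset.sum_congr rfl fun t _ => ?_
      linarith [max_add_min (u (t + 1) - u t) 0]
    have hpartial := hpos.sum_le_tsum (Finset.range N) fun t _ => le_max_right _ 0
    linarith [hc (Set.mem_range_self N)]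
  simpa only [neg_neg] using hneg.neg

theorem tendsto_add_tsum_of_summable_sub {G : Type*} [AddCommGroup G] [TopologicalSpace G]
    [IsTopologicalAddGroup G] {u : ℕ → G} (hd : Summable fun t => u (t + 1) - u t) :
    Tendsto u atTop (𝓝 (u 0 + ∑' t, (u (t + 1) - u t))) :=
  (hd.hasSum.tendsto_sum_nat.const_add (u 0)).congr fun N => by
    rw [Finset.sum_range_sub, add_sub_cancel]

theorem stmt_13 (u : ℕ → ℝ) (hu : ∀ t, 0 ≤ u t)
    (hsum : Summable (fun t => max (u (t + 1) - u t) 0)) :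
    (∃ L : ℝ, Filter.Tendsto u Filter.atTop (nhds L)) ∧
      Summable (fun t => min (u (t + 1) - u t) 0) := by
  have hneg := summable_min_sub_zero_of_bddBelow ⟨0, Set.forall_mem_range.2 hu⟩ hsum
  have hd : Summable fun t => u (t + 1) - u t := by
    simpa only [max_add_min, add_zero] using hsum.add hneg
  exact ⟨⟨_, tendsto_add_tsum_of_summable_sub hd⟩, hneg⟩
end

section
/- Let H be a finite set, m = |H|, and Q_i : ℝ^d → ℝ differentiable for i ∈ H. Suppose the average (1/m)∑_{i∈H} Q_i is γ-strongly convex in the sense ⟨∇Q_H(x) - ∇Q_H(y), x - y⟩ ≥ γ‖x - y‖² for all x, y, where Q_H = (1/m)∑_{i∈H}Q_i, and let x_H be a point with ∇Q_H(x_H) = 0. Suppose also each ‖∇Q_i(x)‖ ≤ C + µ‖x - x_H‖ for all x. Let H' ⊆ H and B be a finite index set disjoint from H with |B| ≤ |H \ H'|, and g_k ∈ ℝ^d for k ∈ B satisfy ‖g_k‖ ≤ max_{j ∈ H\H'}‖∇Q_j(x)‖ for each k. Then at any point x: ⟨x - x_H, ∑_{j∈H'}∇Q_j(x) + ∑_{k∈B}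 g_k⟩ ≥ γ m ‖x - x_H‖² - 2|H\H'| ‖x - x_H‖ (C + µ‖x - x_H‖). -/
/-!
Split `∑_{H'} = ∑_H - ∑_{H \ H'}`. Strong monotonicity of the mean gradient at its zero `x_H`
gives `⟪x - x_H, ∑_H ∇Q_i(x)⟫ ≥ γ m ‖x - x_H‖²`, while both the dropped gradients and the
(at most `|H \ H'|`) vectors `g_k` have norm at most `C + μ‖x - x_H‖`, so by Cauchy–Schwarz each
of the two remaining sums moves the inner product by at most `|H \ H'| ‖x - x_H‖ (C + μ‖x - x_H‖)`.
-/

open RealInnerProductSpace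

lemma norm_sum_le_card_mul {ι E : Type*} [SeminormedAddCommGroup E] {s : Finset ι} {f : ι → E}
    {r : ℝ} (h : ∀ i ∈ s, ‖f i‖ ≤ r) :
    ‖∑ i ∈ s, f i‖ ≤ s.card * r :=
  (norm_sum_le_of_le s h).trans_eq (by rw [Finset.sum_const, nsmul_eq_mul])

section
variable {E ι : Type*} [NormedAddCommGroup E] [InnerProductSpace ℝ E]

lemma real_inner_le_norm_mul_of_norm_le (u : E) {v : E} {r : ℝ} (h : ‖v‖ ≤ r) :
    ⟪u, v⟫ ≤ ‖u‖ * r :=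
  (real_inner_le_norm u v).trans (mul_le_mul_of_nonneg_left h (norm_nonneg u))

lemma neg_norm_mul_le_real_inner_of_norm_le (u : E) {v : E} {r : ℝ} (h : ‖v‖ ≤ r) :
    -(‖u‖ * r) ≤ ⟪u, v⟫ :=
  neg_le.1 (by simpa using real_inner_le_norm_mul_of_norm_le (-u) h)

lemma card_mul_le_real_inner_sum_of_mean {s : Finset ι} (hs : s.Nonempty) {F : ι → E → E}
    {γ : ℝ} {x₀ : E}
    (hmono : ∀ x y : E, ⟪(s.card : ℝ)⁻¹ • (∑ i ∈ s, F i x) - (s.card : ℝ)⁻¹ • (∑ i ∈ s, F i y),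
      x - y⟫ ≥ γ * ‖x - y‖ ^ 2)
    (hstat : (s.card : ℝ)⁻¹ • (∑ i ∈ s, F i x₀) = 0) (x : E) :
    γ * s.card * ‖x - x₀‖ ^ 2 ≤ ⟪x - x₀, ∑ i ∈ s, F i x⟫ := by
  have hcard : (0 : ℝ) < s.card := by exact_mod_cast hs.card_pos
  have h := hmono x x₀
  rw [hstat, sub_zero, real_inner_smul_left, real_inner_comm] at h
  calc γ * s.card * ‖x - x₀‖ ^ 2
      ≤ s.card * ((s.card : ℝ)⁻¹ * ⟪x - x₀, ∑ i ∈ s, F i x⟫) := by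
        rw [mul_comm γ, mul_assoc]
        exact mul_le_mul_of_nonneg_left h hcard.le
    _ = ⟪x - x₀, ∑ i ∈ s, F i x⟫ := by field_simp

end

theorem stmt_14_general {ι : Type*} [DecidableEq ι] {d : ℕ}
    (H H' B : Finset ι) (hH' : H' ⊆ H) (hHne : H.Nonempty)
    (hBcard : B.card ≤ (H \ H').card)
    (gr : ι → EuclideanSpace ℝ (Fin d) → EuclideanSpace ℝ (Fin d))
    (γ μ C : ℝ) (hμ : 0 ≤ μ) (hC : 0 ≤ C)
    (xH : EuclideanSpace ℝ (Fin d))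
    (hmono : ∀ x y : EuclideanSpace ℝ (Fin d),
      ⟪(H.card : ℝ)⁻¹ • (∑ i ∈ H, gr i x) - (H.card : ℝ)⁻¹ • (∑ i ∈ H, gr i y), x - y⟫
        ≥ γ * ‖x - y‖ ^ 2)
    (hstat : (H.card : ℝ)⁻¹ • (∑ i ∈ H, gr i xH) = 0)
    (hbound : ∀ i ∈ H, ∀ x, ‖gr i x‖ ≤ C + μ * ‖x - xH‖)
    (g : ι → EuclideanSpace ℝ (Fin d)) (x : EuclideanSpace ℝ (Fin d))
    (hg : ∀ k ∈ B, ∃ j ∈ H \ H', ‖g k‖ ≤ ‖gr j x‖) :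
    ⟪x - xH, (∑ j ∈ H', gr j x) + ∑ k ∈ B, g k⟫
      ≥ γ * H.card * ‖x - xH‖ ^ 2
        - 2 * (H \ H').card * ‖x - xH‖ * (C + μ * ‖x - xH‖) := by
  have hR : 0 ≤ C + μ * ‖x - xH‖ := by positivity
  have hbound_sdiff : ∀ j ∈ H \ H', ‖gr j x‖ ≤ C + μ * ‖x - xH‖ :=
    fun j hj => hbound j (Finset.mem_sdiff.1 hj).1 x
  have hdropped : ‖∑ j ∈ H \ H', gr j x‖ ≤ (H \ H').card * (C + μ * ‖x - xH‖) :=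
    norm_sum_le_card_mul hbound_sdiff
  have hadded : ‖∑ k ∈ B, g k‖ ≤ (H \ H').card * (C + μ * ‖x - xH‖) := by
    refine (norm_sum_le_card_mul fun k hk => ?_).trans
      (mul_le_mul_of_nonneg_right (by exact_mod_cast hBcard) hR)
    obtain ⟨j, hj, hle⟩ := hg k hk
    exact hle.trans (hbound_sdiff j hj)
  have hsplit : ⟪x - xH, ∑ i ∈ H, gr i x⟫
      = ⟪x - xH, ∑ j ∈ H', gr j x⟫ + ⟪x - xH, ∑ j ∈ H \ H', gr j x⟫ := by
    rw [← Finset.sum_sdiff hH', inner_add_right, add_comm]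
  rw [inner_add_right]
  linarith [card_mul_le_real_inner_sum_of_mean hHne hmono hstat x,
    real_inner_le_norm_mul_of_norm_le (x - xH) hdropped,
    neg_norm_mul_le_real_inner_of_norm_le (x - xH) hadded]

theorem stmt_14 {ι : Type*} [DecidableEq ι] {d : ℕ}
    (H H' B : Finset ι) (hH' : H' ⊆ H) (hHne : H.Nonempty)
    (hdisj : Disjoint B H) (hBcard : B.card ≤ (H \ H').card)
    (Q : ι → EuclideanSpace ℝ (Fin d) → ℝ)
    (gr : ι → EuclideanSpace ℝ (Fin d) → EuclideanSpace ℝ (Fin d))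
    (hgrad : ∀ i ∈ H, ∀ x, HasGradientAt (Q i) (gr i x) x)
    (γ μ C : ℝ) (hγ : 0 < γ) (hμ : 0 ≤ μ) (hC : 0 ≤ C)
    (xH : EuclideanSpace ℝ (Fin d))
    (hmono : ∀ x y : EuclideanSpace ℝ (Fin d),
      ⟪(H.card : ℝ)⁻¹ • (∑ i ∈ H, gr i x) - (H.card : ℝ)⁻¹ • (∑ i ∈ H, gr i y), x - y⟫
        ≥ γ * ‖x - y‖ ^ 2)
    (hstat : (H.card : ℝ)⁻¹ • (∑ i ∈ H, gr i xH) = 0)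
    (hbound : ∀ i ∈ H, ∀ x, ‖gr i x‖ ≤ C + μ * ‖x - xH‖)
    (g : ι → EuclideanSpace ℝ (Fin d)) (x : EuclideanSpace ℝ (Fin d))
    (hg : ∀ k ∈ B, ∃ j ∈ H \ H', ‖g k‖ ≤ ‖gr j x‖) :
    ⟪x - xH, (∑ j ∈ H', gr j x) + ∑ k ∈ B, g k⟫
      ≥ γ * H.card * ‖x - xH‖ ^ 2
        - 2 * (H \ H').card * ‖x - xH‖ * (C + μ * ‖x - xH‖) :=
  stmt_14_general H H' B hH' hHne hBcard gr γ μ C hμ hC xH hmono hstat hbound g x hg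
end
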